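/- arXiv:2605.18705 — 5 statements merged into one kernel-verified Lean document; each statement's English description precedes it below -/
import Mathlib

section
/- (Almansi decomposition on the plane.) Let u : ℝ² → ℝ be an entire biharmonic function. Then there exist harmonic functions h₀, h₁ : ℝ² → ℝ (C^∞ functions with Δh₀ = 0 and Δh₁ = 0 everywhere) such that u(x,y) = h₀(x,y) + (x² + y²)·h₁(x,y) for all (x,y) ∈ ℝ². -/
/-!
Put `w = Δu`, which is harmonic, and write `r² = x² + y²`. For smooth `h`,
`Δ(r² h) = 4 (h + x·∇h) + r² Δh`, so it suffices to find a harmonic `h₁` with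
`h₁ + x·∇h₁ = w / 4`; then `h₀ = u - r² h₁` is harmonic. The radial mean
`h₁(x) = ∫₀¹ w(t x) / 4 dt` works: `t ↦ t w(t x)` has derivative `w(t x) + t x·∇w(t x)`,
which integrates to the Euler equation, and `h₁` is harmonic because `Δ` commutes with the
integral and `Δ(w(t ·)) = t² (Δw)(t ·)`.
-/

noncomputable section
open Metric Set Bornology

/-- The Euclidean plane. -/
abbrev Plane := EuclideanSpace ℝ (Fin 2)

/-- The Euclidean Laplacian `Δf = ∂²f/∂x² + ∂²f/∂y²` of `f : ℝ² → ℝ`. -/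
def lap (f : Plane → ℝ) (x : Plane) : ℝ :=
  ∑ i : Fin 2,
    fderiv ℝ (fun y => fderiv ℝ f y (EuclideanSpace.single i 1)) x (EuclideanSpace.single i 1)

open scoped ContDiff

section ParametricIntegral

variable {E G : Type*} [NormedAddCommGroup E] [NormedSpace ℝ E]
  [NormedAddCommGroup G] [NormedSpace ℝ G]

theorem ContDiff.differentiable_fderiv_apply {f : E → G} (hf : ContDiff ℝ 2 f) (v : E) :
    Differentiable ℝ fun y => fderiv ℝ f y v :=
  ((hf.fderiv_right (m := 1) le_rfl).clm_apply contDiff_const).differentiable one_ne_zero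

variable {F : ℝ → E → G}

theorem ContDiff.fderiv_uncurry {n : WithTop ℕ∞}
    (hF : ContDiff ℝ (n + 1) (Function.uncurry F)) :
    ContDiff ℝ n fun p : ℝ × E => fderiv ℝ (F p.1) p.2 :=
  ContDiff.fderiv_succ (f := fun p : ℝ × E => F p.1)
    (hF.comp (contDiff_fst.fst.prodMk contDiff_snd)) contDiff_snd

variable [FiniteDimensional ℝ E]

theorem hasFDerivAt_intervalIntegral_of_contDiff (hF : ContDiff ℝ 1 (Function.uncurry F))
    (a b : ℝ) (x₀ : E) :
    HasFDerivAt (fun x => ∫ t in a..b, F t x) (∫ t in a..b, fderiv ℝ (F t) x₀) x₀ := by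
  have hF' : Continuous fun p : ℝ × E => fderiv ℝ (F p.1) p.2 :=
    (ContDiff.fderiv_uncurry (n := 0) hF).continuous
  obtain ⟨C, hC⟩ :=
    (isCompact_uIcc.prod (isCompact_closedBall x₀ 1)).exists_bound_of_continuousOn
      hF'.continuousOn
  have hslice (x : E) : Continuous fun t => F t x :=
    hF.continuous.comp (continuous_id.prodMk continuous_const)
  refine intervalIntegral.hasFDerivAt_integral_of_dominated_of_fderiv_le
    (F' := fun x t => fderiv ℝ (F t) x) (bound := fun _ => C)
    (ball_mem_nhds x₀ one_pos) (.of_forall fun x => (hslice x).aestronglyMeasurable)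
    ((hslice x₀).intervalIntegrable a b)
    (hF'.comp (continuous_id.prodMk continuous_const)).aestronglyMeasurable ?_
    intervalIntegrable_const ?_
  · exact .of_forall fun t ht x hx =>
      hC (t, x) ⟨uIoc_subset_uIcc ht, ball_subset_closedBall hx⟩
  · refine .of_forall fun t _ x _ => DifferentiableAt.hasFDerivAt ?_
    exact (hF.differentiable one_ne_zero _).comp x
      ((differentiable_const t).prodMk differentiable_id x)

theorem fderiv_intervalIntegral_apply (hF : ContDiff ℝ 1 (Function.uncurry F))
    (a b : ℝ) (x v : E) :
    fderiv ℝ (fun x => ∫ t in a..b, F t x) x v = ∫ t in a..b, fderiv ℝ (F t) x v := by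
  have hcont : Continuous fun t => fderiv ℝ (F t) x :=
    (ContDiff.fderiv_uncurry (n := 0) hF).continuous.comp (continuous_id.prodMk continuous_const)
  rw [(hasFDerivAt_intervalIntegral_of_contDiff hF a b x).fderiv,
    ContinuousLinearMap.intervalIntegral_apply (hcont.intervalIntegrable a b)]

theorem contDiff_intervalIntegral_of_contDiff {n : ℕ∞}
    (hF : ContDiff ℝ n (Function.uncurry F)) (a b : ℝ) :
    ContDiff ℝ n fun x => ∫ t in a..b, F t x := by
  refine contDiff_iff_forall_nat_le.2 fun m hm => ?_
  replace hF := hF.of_le (m := m) (by exact_mod_cast hm)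
  induction m generalizing F with
  | zero =>
    exact contDiff_zero.2
      (intervalIntegral.continuous_parametric_intervalIntegral_of_continuous'
        (f := fun x t => F t x) (hF.continuous.comp continuous_swap) a b)
  | succ m ih =>
    rw [Nat.cast_succ] at hF ⊢
    have hF1 : ContDiff ℝ 1 (Function.uncurry F) := hF.of_le le_add_self
    refine contDiff_succ_iff_fderiv_apply.2 ⟨fun x =>
      (hasFDerivAt_intervalIntegral_of_contDiff hF1 a b x).differentiableAt, by simp, fun v => ?_⟩
    simp_rw [fderiv_intervalIntegral_apply hF1]
    exact ih (F := fun t x => fderiv ℝ (F t) x v) (le_trans (by simp) hm)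
      ((ContDiff.fderiv_uncurry hF).clm_apply contDiff_const)

end ParametricIntegral

section RadialMean

variable {E G : Type*} [NormedAddCommGroup E] [NormedSpace ℝ E] [NormedAddCommGroup G]
  [NormedSpace ℝ G] {w : E → G}

def radialMean (w : E → G) (x : E) : G :=
  ∫ t in (0 : ℝ)..1, w (t • x)

theorem ContDiff.uncurry_comp_smul {n : WithTop ℕ∞} (hw : ContDiff ℝ n w) :
    ContDiff ℝ n (Function.uncurry fun (t : ℝ) (x : E) => w (t • x)) :=
  hw.comp (contDiff_fst.smul contDiff_snd)

variable [FiniteDimensional ℝ E]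

theorem ContDiff.radialMean {n : ℕ∞} (hw : ContDiff ℝ n w) : ContDiff ℝ n (radialMean w) :=
  contDiff_intervalIntegral_of_contDiff hw.uncurry_comp_smul 0 1

theorem radialMean_add_fderiv_apply_self [CompleteSpace G] (hw : ContDiff ℝ 1 w) (x : E) :
    radialMean w x + fderiv ℝ (radialMean w) x x = w x := by
  have hderiv (t : ℝ) : HasDerivAt (fun s : ℝ => s • w (s • x))
      (w (t • x) + t • fderiv ℝ w (t • x) x) t := by
    have := (hw.differentiable one_ne_zero (t • x)).hasFDerivAt.comp_hasDerivAt t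
      ((hasDerivAt_id t).smul_const x)
    exact ((hasDerivAt_id t).smul this).congr_deriv (by simp [add_comm])
  have hcont₁ : Continuous fun t : ℝ => w (t • x) := by fun_prop
  have hcont₂ : Continuous fun t : ℝ => t • fderiv ℝ w (t • x) x := by
    have := hw.continuous_fderiv one_ne_zero
    fun_prop
  have hFTC := intervalIntegral.integral_eq_sub_of_hasDerivAt (fun t _ => hderiv t)
    ((hcont₁.add hcont₂).intervalIntegrable 0 1)
  rw [intervalIntegral.integral_add (hcont₁.intervalIntegrable 0 1)
    (hcont₂.intervalIntegrable 0 1)] at hFTC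
  simp only [one_smul, zero_smul, sub_zero] at hFTC
  unfold radialMean
  rw [← hFTC, fderiv_intervalIntegral_apply hw.uncurry_comp_smul]
  simp [fderiv_comp_smul]

end RadialMean

section Laplacian

variable {f g : Plane → ℝ}

theorem contDiff_lap {n : WithTop ℕ∞} (hf : ContDiff ℝ (n + 2) f) : ContDiff ℝ n (lap f) :=
  ContDiff.sum fun _ _ =>
    (((hf.fderiv_right (m := n + 1) (by rw [add_assoc, one_add_one_eq_two])).clm_apply
      contDiff_const).fderiv_right le_rfl).clm_apply contDiff_const

theorem lap_sub (hf : ContDiff ℝ 2 f) (hg : ContDiff ℝ 2 g) (x : Plane) :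
    lap (fun y => f y - g y) x = lap f x - lap g x := by
  simp only [lap, ← Finset.sum_sub_distrib]
  congr! 1 with i
  set e : Plane := EuclideanSpace.single i 1
  have hD : (fun y => fderiv ℝ (fun y => f y - g y) y e) =
      fun y => fderiv ℝ f y e - fderiv ℝ g y e :=
    funext fun y => by
      rw [fderiv_fun_sub (hf.differentiable two_ne_zero y) (hg.differentiable two_ne_zero y)]
      rfl
  rw [hD, fderiv_fun_sub (hf.differentiable_fderiv_apply e x) (hg.differentiable_fderiv_apply e x)]
  rfl

theorem lap_const_mul (c : ℝ) (f : Plane → ℝ) (x : Plane) :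
    lap (fun y => c * f y) x = c * lap f x := by
  simp only [lap, Finset.mul_sum]
  congr! 1 with i
  set e : Plane := EuclideanSpace.single i 1
  have hD : (fun y => fderiv ℝ (fun y => c * f y) y e) = c • fun y => fderiv ℝ f y e := by
    rw [show (fun y => c * f y) = c • f from rfl, fderiv_const_smul_field]
    rfl
  rw [hD, fderiv_const_smul_field]
  rfl

theorem lap_comp_smul (f : Plane → ℝ) (t : ℝ) (x : Plane) :
    lap (fun y => f (t • y)) x = t ^ 2 * lap f (t • x) := by
  simp only [lap, Finset.mul_sum]
  congr! 1 with i
  set e : Plane := EuclideanSpace.single i 1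
  have hD :
      (fun y => fderiv ℝ (fun y => f (t • y)) y e) = t • fun y => fderiv ℝ f (t • y) e :=
    funext fun y => by simp [fderiv_comp_smul]
  rw [hD, fderiv_const_smul_field]
  simp [fderiv_comp_smul (f := fun y => fderiv ℝ f y e)]
  ring

theorem lap_mul (hf : ContDiff ℝ 2 f) (hg : ContDiff ℝ 2 g) (x : Plane) :
    lap (fun y => f y * g y) x = f x * lap g x + g x * lap f x +
      2 * ∑ i : Fin 2, fderiv ℝ f x (EuclideanSpace.single i 1) *
        fderiv ℝ g x (EuclideanSpace.single i 1) := by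
  simp only [lap, Finset.mul_sum, ← Finset.sum_add_distrib]
  congr! 1 with i
  set e : Plane := EuclideanSpace.single i 1
  have hf1 := hf.differentiable two_ne_zero
  have hg1 := hg.differentiable two_ne_zero
  have hD : (fun y => fderiv ℝ (fun y => f y * g y) y e) =
      fun y => f y * fderiv ℝ g y e + g y * fderiv ℝ f y e :=
    funext fun y => by simp [fderiv_fun_mul (hf1 y) (hg1 y)]
  have hf2 := hf.differentiable_fderiv_apply e x
  have hg2 := hg.differentiable_fderiv_apply e x
  rw [hD, fderiv_fun_add (by exact (hf1 x).mul hg2) (by exact (hg1 x).mul hf2),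
    fderiv_fun_mul (hf1 x) hg2, fderiv_fun_mul (hg1 x) hf2]
  simp only [add_apply, smul_apply, smul_eq_mul]
  ring

theorem lap_intervalIntegral {F : ℝ → Plane → ℝ} (hF : ContDiff ℝ 2 (Function.uncurry F))
    (a b : ℝ) (x : Plane) :
    lap (fun x => ∫ t in a..b, F t x) x = ∫ t in a..b, lap (F t) x := by
  have hF1 : ContDiff ℝ 1 (Function.uncurry F) := hF.of_le one_le_two
  have hDF (v : Plane) : ContDiff ℝ 1 (Function.uncurry fun t y => fderiv ℝ (F t) y v) :=
    (ContDiff.fderiv_uncurry (n := 1) hF).clm_apply contDiff_const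
  have hDDF (v : Plane) : Continuous fun t => fderiv ℝ (fun y => fderiv ℝ (F t) y v) x v :=
    ((ContDiff.fderiv_uncurry (n := 0) (hDF v)).clm_apply contDiff_const).continuous.comp
      (continuous_id.prodMk continuous_const)
  simp only [lap]
  rw [intervalIntegral.integral_finsetSum fun i _ => (hDDF _).intervalIntegrable a b]
  congr! 1 with i
  simp_rw [fderiv_intervalIntegral_apply hF1, fderiv_intervalIntegral_apply (hDF _)]

theorem lap_radialMean {w : Plane → ℝ} (hw : ContDiff ℝ 2 w) (x : Plane) :
    lap (radialMean w) x = ∫ t in (0 : ℝ)..1, t ^ 2 * lap w (t • x) := by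
  unfold radialMean
  simp only [lap_intervalIntegral hw.uncurry_comp_smul, lap_comp_smul]

theorem lap_norm_sq (x : Plane) : lap (fun y => ‖y‖ ^ 2) x = 4 := by
  have hD (v : Plane) :
      (fun y => fderiv ℝ (fun y : Plane => ‖y‖ ^ 2) y v) = ⇑((2 : ℝ) • innerSL ℝ v) :=
    funext fun y => by simp [real_inner_comm]
  simp only [lap, hD, ContinuousLinearMap.fderiv]
  norm_num

theorem sum_fderiv_norm_sq_mul_fderiv (h : Plane → ℝ) (x : Plane) :
    ∑ i : Fin 2, fderiv ℝ (fun y : Plane => ‖y‖ ^ 2) x (EuclideanSpace.single i 1) *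
      fderiv ℝ h x (EuclideanSpace.single i 1) = 2 * fderiv ℝ h x x := by
  have hx := congrArg (fderiv ℝ h x) ((EuclideanSpace.basisFun (Fin 2) ℝ).sum_repr x)
  simp only [map_sum, map_smul, EuclideanSpace.basisFun_apply, EuclideanSpace.basisFun_repr,
    smul_eq_mul] at hx
  rw [← hx, Finset.mul_sum]
  simp [EuclideanSpace.inner_single_right, mul_assoc]

theorem lap_norm_sq_mul {h : Plane → ℝ} (hh : ContDiff ℝ 2 h) (x : Plane) :
    lap (fun y => ‖y‖ ^ 2 * h y) x =
      4 * h x + 4 * fderiv ℝ h x x + ‖x‖ ^ 2 * lap h x := by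
  rw [lap_mul (contDiff_norm_sq ℝ) hh, lap_norm_sq, sum_fderiv_norm_sq_mul_fderiv]
  ring

end Laplacian

/-- Almansi decomposition: every entire biharmonic function `u` on `ℝ²`
can be written as `u(x,y) = h₀(x,y) + (x² + y²) h₁(x,y)` with `h₀, h₁` harmonic. -/
theorem stmt_3 (u : Plane → ℝ)
    (hsmooth : ContDiff ℝ (⊤ : ℕ∞) u) (hbiharm : ∀ x, lap (lap u) x = 0) :
    ∃ h₀ h₁ : Plane → ℝ,
      ContDiff ℝ (⊤ : ℕ∞) h₀ ∧ (∀ x, lap h₀ x = 0) ∧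
      ContDiff ℝ (⊤ : ℕ∞) h₁ ∧ (∀ x, lap h₁ x = 0) ∧
      ∀ x : Plane, u x = h₀ x + (x 0 ^ 2 + x 1 ^ 2) * h₁ x := by
  have hw : ContDiff ℝ ∞ fun y => 4⁻¹ * lap u y := contDiff_const.mul (contDiff_lap hsmooth)
  set h₁ := radialMean fun y => 4⁻¹ * lap u y
  have hh₁ : ContDiff ℝ ∞ h₁ := hw.radialMean
  have hh₁_harm (x : Plane) : lap h₁ x = 0 := by
    simp [h₁, lap_radialMean (hw.of_le (by norm_cast)), lap_const_mul, hbiharm]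
  have hEuler (x : Plane) : h₁ x + fderiv ℝ h₁ x x = 4⁻¹ * lap u x :=
    radialMean_add_fderiv_apply_self (hw.of_le (by norm_cast)) x
  have hh₁2 : ContDiff ℝ 2 h₁ := hh₁.of_le (by norm_cast)
  refine ⟨fun y => u y - ‖y‖ ^ 2 * h₁ y, h₁,
    hsmooth.sub ((contDiff_norm_sq ℝ).mul hh₁), fun x => ?_, hh₁, hh₁_harm, fun x => ?_⟩
  · rw [lap_sub (hsmooth.of_le (by norm_cast)) ((contDiff_norm_sq ℝ).mul hh₁2),
      lap_norm_sq_mul hh₁2, hh₁_harm]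
    linarith [hEuler x]
  · simp [EuclideanSpace.norm_sq_eq, Fin.sum_univ_two]
end
end

section
/- Let h : ℝ² → ℝ be a harmonic function (C^∞ with Δh = 0 everywhere) that is not identically zero. Then the zero set h⁻¹(0) has no connected component homeomorphic to the circle S¹; equivalently, a nonzero entire harmonic function on the plane has no nodal ovals, and in particular its nodal set contains no double nest. -/
noncomputable section
open Metric Set Bornology

/-- A nodal oval of `u` : a connected component of the zero set `u⁻¹(0)` that is
homeomorphic to the circle `S¹`. -/
def IsNodalOval (u : Plane → ℝ) (γ : Set Plane) : Prop :=
  (∃ x ∈ u ⁻¹' {0}, γ = connectedComponentIn (u ⁻¹' {0}) x) ∧ Nonempty (γ ≃ₜ Circle)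

/-- `D` is a bounded connected component of the complement of `γ` (the "inside" `D(γ)`
of a nodal oval, by the Jordan curve theorem). -/
def IsInnerDisk (γ D : Set Plane) : Prop :=
  IsBounded D ∧ ∃ x ∈ γᶜ, D = connectedComponentIn γᶜ x

/-- A double nest: an ordered pair `(γin, γout)` of distinct nodal ovals of `u` with
`closure (D(γin)) ⊆ D(γout)`. -/
def IsDoubleNest (u : Plane → ℝ) (γin γout : Set Plane) : Prop :=
  IsNodalOval u γin ∧ IsNodalOval u γout ∧ γin ≠ γout ∧
    ∃ Din Dout, IsInnerDisk γin Din ∧ IsInnerDisk γout Dout ∧ closure Din ⊆ Dout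

/-- The set of double nests of `u`, whose cardinality is `N_dn(u)`. -/
def doubleNests (u : Plane → ℝ) : Set (Set Plane × Set Plane) :=
  {p | IsDoubleNest u p.1 p.2}

/-! A nodal oval is a compact connected component of the closed set `Z = h⁻¹(0)`, so some
open `U` around it meets `Z` in a compact set. Identify the plane with `ℂ` and write `h = Re F`
with `F` entire. If `F` were not constant it would be an open map; at a point `w` of the compact
set `U ∩ Z` where `Im F` is maximal, `F(U)` would contain `F w + i t` for small `t > 0`, and a
preimage of that point lies in `U ∩ Z` with larger `Im F`. Hence `F` is constant, so `h` is
constant and, vanishing on the oval, zero. -/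

open Laplacian InnerProductSpace Topology Filter

theorem exists_isClopen_of_connectedComponent_subset {X : Type*} [TopologicalSpace X] [T2Space X]
    [CompactSpace X] {x : X} {U : Set X} (hU : IsOpen U) (hcU : connectedComponent x ⊆ U) :
    ∃ V, IsClopen V ∧ x ∈ V ∧ V ⊆ U := by
  have hempty : Uᶜ ∩ ⋂ s : {s : Set X // IsClopen s ∧ x ∈ s}, (s : Set X) = ∅ := by
    rw [← connectedComponent_eq_iInter_isClopen, ← disjoint_iff_inter_eq_empty]
    exact disjoint_compl_left_iff_subset.2 hcU
  obtain ⟨t, ht⟩ := hU.isClosed_compl.isCompact.elim_finite_subfamily_closed _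
    (fun s => s.2.1.isClosed) hempty
  refine ⟨⋂ s ∈ t, (s : Set X), isClopen_biInter_finset fun s _ => s.2.1,
    mem_iInter₂.2 fun s _ => s.2.2, ?_⟩
  rwa [← disjoint_compl_left_iff_subset, disjoint_iff_inter_eq_empty]

theorem IsClosed.exists_isOpen_isCompact_inter_of_isCompact_connectedComponentIn {X : Type*}
    [TopologicalSpace X] [T2Space X] [LocallyCompactSpace X] {Z : Set X} (hZ : IsClosed Z)
    {x : X} (hx : x ∈ Z) (hc : IsCompact (connectedComponentIn Z x)) :
    ∃ U, IsOpen U ∧ x ∈ U ∧ IsCompact (U ∩ Z) := by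
  obtain ⟨W, hW, hcW, hWc⟩ := exists_isOpen_superset_and_isCompact_closure hc
  set K := Z ∩ closure W
  have hK : IsCompact K := hWc.inter_left hZ
  have hxK : x ∈ K := ⟨hx, subset_closure (hcW (mem_connectedComponentIn hx))⟩
  have : CompactSpace K := isCompact_iff_compactSpace.1 hK
  have hcompW : connectedComponent (⟨x, hxK⟩ : K) ⊆ (↑) ⁻¹' W := by
    rw [← image_subset_iff, ← connectedComponentIn_eq_image hxK]
    exact (connectedComponentIn_mono _ inter_subset_left).trans hcW
  obtain ⟨V, hV, hxV, hVW⟩ :=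
    exists_isClopen_of_connectedComponent_subset (hW.preimage continuous_subtype_val) hcompW
  have hVc : IsClosed (((↑) : K → X) '' Vᶜ) :=
    (hV.compl.isClosed.isCompact.image continuous_subtype_val).isClosed
  refine ⟨W \ ((↑) '' Vᶜ), hW.sdiff hVc, ⟨hcW (mem_connectedComponentIn hx), ?_⟩, ?_⟩
  · rintro ⟨y, hy, hyx⟩
    exact hy ((Subtype.ext hyx : y = ⟨x, hxK⟩) ▸ hxV)
  · convert hV.isClosed.isCompact.image continuous_subtype_val using 1
    ext y
    constructor
    · rintro ⟨⟨hyW, hyV⟩, hyZ⟩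
      exact ⟨⟨y, hyZ, subset_closure hyW⟩, by_contra fun h => hyV ⟨_, h, rfl⟩, rfl⟩
    · rintro ⟨y, hyV, rfl⟩
      refine ⟨⟨hVW hyV, ?_⟩, y.2.1⟩
      rintro ⟨y', hy', hyy'⟩
      exact hy' (Subtype.ext hyy' ▸ hyV)

theorem Differentiable.exists_eq_const_of_isCompact_inter_re_eq_zero {f : ℂ → ℂ}
    (hf : Differentiable ℂ f) {U : Set ℂ} (hU : IsOpen U)
    (hK : IsCompact (U ∩ {z | (f z).re = 0})) (hKne : (U ∩ {z | (f z).re = 0}).Nonempty) :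
    ∃ c, ∀ z, f z = c := by
  obtain ⟨w, ⟨hwU, hw⟩, hmax⟩ :=
    hK.exists_isMaxOn hKne (Complex.continuous_im.comp hf.continuous).continuousOn
  rcases (hf.differentiableOn.analyticOnNhd isOpen_univ).is_constant_or_isOpen
    isPreconnected_univ with ⟨c, hc⟩ | hopen
  · exact ⟨c, fun z => hc z (mem_univ z)⟩
  have hlim : Tendsto (fun t : ℝ => f w + t * Complex.I) (𝓝[>] 0) (𝓝 (f w)) := by
    apply tendsto_nhdsWithin_of_tendsto_nhds
    simpa using ((Complex.continuous_ofReal.mul continuous_const).const_add (f w)).tendsto (0 : ℝ)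
  obtain ⟨t, ⟨w', hw'U, hfw'⟩, ht⟩ :=
    ((hlim.eventually ((hopen U (subset_univ U) hU).mem_nhds ⟨w, hwU, rfl⟩)).and
      self_mem_nhdsWithin).exists
  have hw'K : w' ∈ U ∩ {z | (f z).re = 0} := ⟨hw'U, by simpa [hfw'] using hw⟩
  have hle : (f w').im ≤ (f w).im := hmax hw'K
  simp [hfw'] at hle
  linarith [show (0 : ℝ) < t from ht]

section Laplacian

variable {E F G : Type*} [NormedAddCommGroup E] [InnerProductSpace ℝ E] [FiniteDimensional ℝ E]
  [NormedAddCommGroup F] [InnerProductSpace ℝ F] [FiniteDimensional ℝ F]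
  [NormedAddCommGroup G] [NormedSpace ℝ G]

theorem ContDiff.laplacian_comp_linearIsometryEquiv {f : F → G} (hf : ContDiff ℝ 2 f)
    (e : E ≃ₗᵢ[ℝ] F) (x : E) : Δ (f ∘ e) x = Δ f (e x) := by
  rw [laplacian_eq_iteratedFDeriv_orthonormalBasis _ (stdOrthonormalBasis ℝ E),
    laplacian_eq_iteratedFDeriv_orthonormalBasis _ ((stdOrthonormalBasis ℝ E).map e)]
  simp only [← e.coe_toContinuousLinearEquiv, ← ContinuousLinearEquiv.coe_coe,
    ContinuousLinearMap.iteratedFDeriv_comp_right _ hf _ le_rfl]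
  refine Finset.sum_congr rfl fun i _ => ?_
  simp only [ContinuousMultilinearMap.compContinuousLinearMap_apply]
  congr 1
  ext j
  fin_cases j <;> rfl

theorem InnerProductSpace.HarmonicOnNhd.comp_linearIsometryEquiv {f : F → G}
    (hf : HarmonicOnNhd f univ) (e : E ≃ₗᵢ[ℝ] F) : HarmonicOnNhd (f ∘ e) univ := by
  have hf2 : ContDiff ℝ 2 f := contDiffOn_univ.1 hf.contDiffOn
  refine fun x _ => ⟨(hf2.comp e.toContinuousLinearEquiv.contDiff).contDiffAt,
    Eventually.of_forall fun y => ?_⟩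
  rw [hf2.laplacian_comp_linearIsometryEquiv]
  exact (hf (e y) (mem_univ _)).2.self_of_nhds

end Laplacian

theorem ContDiff.laplacian_eq_lap {h : Plane → ℝ} (hh : ContDiff ℝ 2 h) : Δ h = lap h := by
  have hd : Differentiable ℝ (fderiv ℝ h) :=
    (hh.fderiv_right (m := 1) le_rfl).differentiable one_ne_zero
  ext x
  rw [laplacian_eq_iteratedFDeriv_orthonormalBasis _ (EuclideanSpace.basisFun (Fin 2) ℝ)]
  simp [lap, iteratedFDeriv_two_apply, fderiv_clm_apply (hd x) (differentiableAt_const _)]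

theorem harmonicOnNhd_univ_of_lap_eq_zero {h : Plane → ℝ} (hh : ContDiff ℝ 2 h)
    (hlap : ∀ x, lap h x = 0) : HarmonicOnNhd h univ := fun _ _ =>
  ⟨hh.contDiffAt, Eventually.of_forall fun y => by simp [hh.laplacian_eq_lap, hlap]⟩

theorem InnerProductSpace.HarmonicOnNhd.eq_zero_of_isCompact_inter_preimage_zero {u : ℂ → ℝ}
    (hu : HarmonicOnNhd u univ) {U : Set ℂ} (hU : IsOpen U) (hK : IsCompact (U ∩ u ⁻¹' {0}))
    (hKne : (U ∩ u ⁻¹' {0}).Nonempty) : u = 0 := by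
  obtain ⟨F, hF, rfl⟩ := hu.exists_analyticOnNhd_univ_re_eq
  obtain ⟨c, hc⟩ := (differentiableOn_univ.1 hF.differentiableOn)
    |>.exists_eq_const_of_isCompact_inter_re_eq_zero hU hK hKne
  obtain ⟨z, -, hz⟩ := hKne
  ext w
  simpa [hc] using hz

/-- A nonzero entire harmonic function on the plane has no nodal ovals;
in particular its nodal set contains no double nest. -/
theorem stmt_5 (h : Plane → ℝ) (hne : h ≠ 0)
    (hsmooth : ContDiff ℝ (⊤ : ℕ∞) h) (hharm : ∀ x, lap h x = 0) :
    (∀ γ : Set Plane, ¬ IsNodalOval h γ) ∧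
      (∀ γin γout : Set Plane, ¬ IsDoubleNest h γin γout) := by
  have hC2 : ContDiff ℝ 2 h := hsmooth.of_le (WithTop.coe_le_coe.2 le_top)
  let e := Complex.orthonormalBasisOneI.repr
  have hharmC : HarmonicOnNhd (h ∘ e) univ :=
    (harmonicOnNhd_univ_of_lap_eq_zero hC2 hharm).comp_linearIsometryEquiv e
  have no_oval : ∀ γ, ¬ IsNodalOval h γ := by
    rintro γ ⟨⟨x, hx, rfl⟩, ⟨φ⟩⟩
    obtain ⟨U, hU, hxU, hUZ⟩ := (isClosed_singleton.preimage hC2.continuous)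
      |>.exists_isOpen_isCompact_inter_of_isCompact_connectedComponentIn hx
        (isCompact_iff_compactSpace.2 φ.symm.compactSpace)
    have hzero := hharmC.eq_zero_of_isCompact_inter_preimage_zero (hU.preimage e.continuous)
      (e.toHomeomorph.isCompact_preimage.2 hUZ) ⟨e.symm x, by simpa using ⟨hxU, hx⟩⟩
    exact hne (funext fun y => by simpa using congrFun hzero (e.symm y))
  exact ⟨no_oval, fun γin _ hnest => no_oval γin hnest.1⟩
end
end

section
/- (Bézout bound for plane curves.) Let f, g ∈ ℂ[x,y] be nonzero polynomials with no common irreducible factor (i.e. every common divisor of f and g is a unit). Then the common zero set {(x,y) ∈ ℂ² : f(x,y) = 0 and g(x,y) = 0} is finite and has at most (deg f)·(deg g) elements, where deg denotes total degree. -/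
noncomputable section
open MvPolynomial Set

lemma top_comp_ne_zero {σ : Type*} (p : MvPolynomial σ ℂ) (hp : p ≠ 0) :
    homogeneousComponent p.totalDegree p ≠ 0 := by
  obtain ⟨s, hs, hdeg⟩ := p.support.exists_mem_eq_sup (support_nonempty.mpr hp)
    (fun s => s.sum fun _ e => e)
  intro h0
  have : coeff s (homogeneousComponent p.totalDegree p) = coeff s p := by
    rw [coeff_homogeneousComponent, if_pos]
    rw [totalDegree, hdeg]; rfl
  rw [h0] at this
  exact (mem_support_iff.mp hs) (by simpa using this.symm)

lemma sub_top_comp (q : MvPolynomial (Fin 2) ℂ) :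
    q - homogeneousComponent q.totalDegree q = 0 ∨
      (q - homogeneousComponent q.totalDegree q).totalDegree < q.totalDegree := by
  classical
  set Q := homogeneousComponent q.totalDegree q with hQdef
  have hcoeff : ∀ s : Fin 2 →₀ ℕ, coeff s (q - Q) = if s.degree = q.totalDegree then 0 else coeff s q := by
    intro s
    rw [coeff_sub, hQdef, coeff_homogeneousComponent]
    split_ifs <;> ring
  by_cases h0 : q - Q = 0
  · exact Or.inl h0
  right
  rcases Nat.eq_zero_or_pos q.totalDegree with hdq | hdq
  · exfalso
    apply h0
    ext s
    rw [hcoeff s, coeff_zero]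
    split_ifs with hs
    · rfl
    · by_contra hc
      have : s.degree ≤ q.totalDegree := by
        have hs' : s ∈ q.support := mem_support_iff.mpr hc
        exact le_totalDegree hs'
      omega
  · rw [totalDegree]
    apply Finset.sup_lt_iff (by simpa using hdq) |>.mpr
    intro s hs
    have hc := mem_support_iff.mp hs
    rw [hcoeff s] at hc
    split_ifs at hc with hsd
    · exact absurd rfl hc
    · have : s.degree ≤ q.totalDegree := le_totalDegree (mem_support_iff.mpr hc)
      have : s.degree < q.totalDegree := lt_of_le_of_ne this hsd
      exact this

lemma tdeg_mul_eq (p q : MvPolynomial (Fin 2) ℂ) (hp : p ≠ 0) (hq : q ≠ 0) :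
    (p * q).totalDegree = p.totalDegree + q.totalDegree := by
  classical
  refine le_antisymm (totalDegree_mul p q) ?_
  have hP : homogeneousComponent p.totalDegree p ≠ 0 := top_comp_ne_zero p hp
  have hQ : homogeneousComponent q.totalDegree q ≠ 0 := top_comp_ne_zero q hq
  have hPle := (homogeneousComponent_isHomogeneous p.totalDegree p).totalDegree_le
  have hQle := (homogeneousComponent_isHomogeneous q.totalDegree q).totalDegree_le
  have hPQmem : homogeneousComponent p.totalDegree p * homogeneousComponent q.totalDegree q ∈
      homogeneousSubmodule (Fin 2) ℂ (p.totalDegree + q.totalDegree) :=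
    ((homogeneousComponent_isHomogeneous p.totalDegree p).mul
      (homogeneousComponent_isHomogeneous q.totalDegree q))
  have hmul0 : ∀ a b : MvPolynomial (Fin 2) ℂ, a.totalDegree + b.totalDegree <
      p.totalDegree + q.totalDegree →
      homogeneousComponent (p.totalDegree + q.totalDegree) (a * b) = 0 := by
    intro a b hab
    exact homogeneousComponent_eq_zero _ _ (lt_of_le_of_lt (totalDegree_mul a b) hab)
  have hzero : ∀ a b : MvPolynomial (Fin 2) ℂ,
      (a = 0 ∨ a.totalDegree < p.totalDegree) → b.totalDegree ≤ q.totalDegree →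
      homogeneousComponent (p.totalDegree + q.totalDegree) (a * b) = 0 := by
    intro a b ha hb
    rcases ha with rfl | ha
    · simp
    · exact hmul0 a b (by omega)
  have hzero' : ∀ b : MvPolynomial (Fin 2) ℂ,
      (b = 0 ∨ b.totalDegree < q.totalDegree) →
      homogeneousComponent (p.totalDegree + q.totalDegree)
        (homogeneousComponent p.totalDegree p * b) = 0 := by
    intro b hb
    rcases hb with rfl | hb
    · simp
    · exact hmul0 _ b (by omega)
  have hkey : homogeneousComponent (p.totalDegree + q.totalDegree) (p * q) =
      homogeneousComponent p.totalDegree p * homogeneousComponent q.totalDegree q := by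
    have hdecomp : p * q = homogeneousComponent p.totalDegree p * homogeneousComponent q.totalDegree q
        + (homogeneousComponent p.totalDegree p * (q - homogeneousComponent q.totalDegree q)
          + (p - homogeneousComponent p.totalDegree p) * homogeneousComponent q.totalDegree q
          + (p - homogeneousComponent p.totalDegree p) * (q - homogeneousComponent q.totalDegree q)) := by
      ring
    rw [hdecomp, map_add, map_add, map_add]
    rw [homogeneousComponent_of_mem hPQmem, if_pos rfl]
    rw [hzero' _ (sub_top_comp q)]
    rw [hzero _ _ (sub_top_comp p) hQle]
    have hlast : homogeneousComponent (p.totalDegree + q.totalDegree)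
        ((p - homogeneousComponent p.totalDegree p) * (q - homogeneousComponent q.totalDegree q)) = 0 := by
      rcases sub_top_comp q with h | h
      · rw [h, mul_zero, map_zero]
      · rcases sub_top_comp p with h' | h'
        · rw [h', zero_mul, map_zero]
        · exact hmul0 _ _ (by omega)
    rw [hlast, add_zero, add_zero, add_zero]
  by_contra hlt
  push_neg at hlt
  have h0 : homogeneousComponent (p.totalDegree + q.totalDegree) (p * q) = 0 :=
    homogeneousComponent_eq_zero _ _ hlt
  rw [hkey] at h0
  exact mul_ne_zero hP hQ h0

lemma tdeg_aeval_le (v : Fin 2 → MvPolynomial (Fin 2) ℂ) (hv : ∀ i, (v i).totalDegree ≤ 1)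
    (p : MvPolynomial (Fin 2) ℂ) : (aeval v p).totalDegree ≤ p.totalDegree := by
  classical
  conv_lhs => rw [p.as_sum]
  rw [map_sum]
  refine (totalDegree_finset_sum _ _).trans (Finset.sup_le fun s hs => ?_)
  rw [aeval_monomial]
  refine (totalDegree_mul _ _).trans ?_
  have h1 : (algebraMap ℂ (MvPolynomial (Fin 2) ℂ) (coeff s p)).totalDegree = 0 := by
    rw [MvPolynomial.algebraMap_eq, totalDegree_C]
  rw [h1, zero_add]
  rw [Finsupp.prod]
  refine (totalDegree_finset_prod _ _).trans ?_
  calc ∑ i ∈ s.support, ((v i) ^ (s i)).totalDegree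
      ≤ ∑ i ∈ s.support, s i * (v i).totalDegree :=
        Finset.sum_le_sum fun i _ => totalDegree_pow _ _
    _ ≤ ∑ i ∈ s.support, s i * 1 := Finset.sum_le_sum fun i _ =>
        Nat.mul_le_mul_left _ (hv i)
    _ = s.sum fun _ e => e := by simp [Finsupp.sum]
    _ ≤ p.totalDegree := le_totalDegree hs

def degFinset (k : ℕ) : Finset (ℕ × ℕ) :=
  (Finset.range (k+1) ×ˢ Finset.range (k+1)).filter fun ij => ij.1 + ij.2 ≤ k

lemma mem_degFinset {k : ℕ} {ij : ℕ × ℕ} : ij ∈ degFinset k ↔ ij.1 + ij.2 ≤ k := by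
  simp only [degFinset, Finset.mem_filter, Finset.mem_product, Finset.mem_range]
  omega

lemma card_degFinset (k : ℕ) : 2 * (degFinset k).card = (k+1) * (k+2) := by
  induction k with
  | zero => decide
  | succ k ih =>
    have hsub : degFinset k ⊆ degFinset (k+1) := fun ij h =>
      mem_degFinset.mpr (le_trans (mem_degFinset.mp h) (Nat.le_succ k))
    have himg : degFinset (k+1) \ degFinset k = (Finset.range (k+2)).image fun i => (i, k+1-i) := by
      ext ij
      simp only [Finset.mem_sdiff, mem_degFinset, Finset.mem_image, Finset.mem_range,
        Prod.ext_iff]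
      constructor
      · rintro ⟨h1, h2⟩
        exact ⟨ij.1, by omega, rfl, by omega⟩
      · rintro ⟨i, hi, h1, h2⟩
        omega
    have hinj : Function.Injective fun i : ℕ => (i, k+1-i) := by
      intro a b h
      simpa using congrArg Prod.fst h
    have h1 := Finset.card_sdiff_of_subset hsub
    rw [himg, Finset.card_image_of_injective _ hinj, Finset.card_range] at h1
    have h2 : (degFinset k).card ≤ (degFinset (k+1)).card := Finset.card_le_card hsub
    have h3 : (degFinset (k+1)).card = (degFinset k).card + (k+2) := by omega
    rw [h3]
    calc 2 * ((degFinset k).card + (k+2)) = 2 * (degFinset k).card + 2*(k+2) := by ring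
      _ = (k+1)*(k+2) + 2*(k+2) := by rw [ih]
      _ = (k+1+1)*(k+1+2) := by ring

lemma finsupp_fin2_eq (s : Fin 2 →₀ ℕ) :
    s = Finsupp.single 0 (s 0) + Finsupp.single 1 (s 1) := by
  ext i
  fin_cases i <;> simp [Finsupp.single_apply]

lemma fin2_sum (s : Fin 2 →₀ ℕ) : (s.sum fun _ e => e) = s 0 + s 1 := by
  rw [Finsupp.sum_fintype _ _ (fun _ => rfl), Fin.sum_univ_two]

/-- the monomial family indexed by degFinset -/
def mono2 (k : ℕ) (ij : degFinset k) : MvPolynomial (Fin 2) ℂ :=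
  monomial (Finsupp.single 0 (ij : ℕ × ℕ).1 + Finsupp.single 1 (ij : ℕ × ℕ).2) (1:ℂ)

lemma li_mono2 (k : ℕ) : LinearIndependent ℂ (mono2 k) := by
  have hinj : Function.Injective (fun ij : degFinset k =>
      Finsupp.single (0 : Fin 2) (ij : ℕ × ℕ).1 + Finsupp.single 1 (ij : ℕ × ℕ).2) := by
    intro a b h
    have h0 := DFunLike.congr_fun h 0
    have h1 := DFunLike.congr_fun h 1
    simp [Finsupp.single_apply] at h0 h1
    exact Subtype.ext (Prod.ext h0 h1)
  have := (basisMonomials (Fin 2) ℂ).linearIndependent.comp _ hinj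
  have heq : ((basisMonomials (Fin 2) ℂ) ∘ fun ij : degFinset k =>
      Finsupp.single (0 : Fin 2) (ij : ℕ × ℕ).1 + Finsupp.single 1 (ij : ℕ × ℕ).2) = mono2 k := by
    funext ij
    simp [Function.comp, coe_basisMonomials, mono2]
  rwa [heq] at this

lemma rtd_eq_span (k : ℕ) :
    restrictTotalDegree (Fin 2) ℂ k = Submodule.span ℂ (Set.range (mono2 k)) := by
  apply le_antisymm
  · intro p hp
    rw [mem_restrictTotalDegree] at hp
    rw [p.as_sum]
    apply Submodule.sum_mem
    intro s hs
    have h1 : s 0 + s 1 ≤ k := by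
      have h2 := le_totalDegree hs
      rw [fin2_sum] at h2
      omega
    have heq : monomial s (coeff s p) = (coeff s p) • mono2 k ⟨(s 0, s 1), mem_degFinset.mpr h1⟩ := by
      rw [mono2, smul_monomial, smul_eq_mul, mul_one]
      exact congrArg (fun t => monomial t (coeff s p)) (finsupp_fin2_eq s)
    rw [heq]
    exact Submodule.smul_mem _ _ (Submodule.subset_span ⟨_, rfl⟩)
  · rw [Submodule.span_le]
    rintro _ ⟨ij, rfl⟩
    rw [SetLike.mem_coe, mem_restrictTotalDegree, mono2,
      totalDegree_monomial _ one_ne_zero, fin2_sum]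
    have h2 := mem_degFinset.mp ij.2
    simp [Finsupp.single_apply]
    omega

lemma finrank_rtd (k : ℕ) :
    2 * Module.finrank ℂ (restrictTotalDegree (Fin 2) ℂ k) = (k+1) * (k+2) := by
  rw [rtd_eq_span, finrank_span_eq_card (li_mono2 k), Fintype.card_coe]
  exact card_degFinset k

local notation "MP" => MvPolynomial (Fin 2) ℂ

lemma key_lemma (f g : MP) (hf : f ≠ 0) (hg : g ≠ 0)
    (hcop : ∀ d : MP, d ∣ f → d ∣ g → IsUnit d) :
    ∃ p : Polynomial ℂ, p ≠ 0 ∧ p.natDegree ≤ f.totalDegree * g.totalDegree ∧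
      ∀ x : Fin 2 → ℂ, eval x f = 0 → eval x g = 0 → Polynomial.eval (x 0) p = 0 := by
  classical
  set m := f.totalDegree with hm
  set n := g.totalDegree with hn
  set q := m * n with hq
  set φ : ((restrictTotalDegree (Fin 2) ℂ (q + n)) × (restrictTotalDegree (Fin 2) ℂ (q + m)))
      →ₗ[ℂ] MP :=
    (LinearMap.mulLeft ℂ f) ∘ₗ (Submodule.subtype _) ∘ₗ (LinearMap.fst ℂ _ _) +
    (LinearMap.mulLeft ℂ g) ∘ₗ (Submodule.subtype _) ∘ₗ (LinearMap.snd ℂ _ _) with hφdef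
  have hφ_apply : ∀ v, φ v = f * (v.1 : MP) + g * (v.2 : MP) := fun v => rfl
  set J : Submodule ℂ MP := (restrictTotalDegree (Fin 2) ℂ q).map (LinearMap.mulLeft ℂ g)
    with hJ
  haveI hJfin : Module.Finite ℂ J := by
    rw [hJ]; exact Module.Finite.map _ _
  have hker : ∀ v, φ v = 0 → (v.1.1 : MP) ∈ J := by
    intro v hv
    rw [hφ_apply] at hv
    have hdvd : g ∣ f * (v.1.1 : MP) := ⟨-(v.2.1 : MP), by linear_combination hv⟩
    have hrel : IsRelPrime g f := fun d hdg hdf => hcop d hdf hdg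
    obtain ⟨c, hc⟩ := hrel.dvd_of_dvd_mul_left hdvd
    by_cases hc0 : c = 0
    · rw [hc, hc0, mul_zero]
      exact ⟨0, Submodule.zero_mem _, by simp⟩
    · refine ⟨c, ?_, hc.symm⟩
      rw [SetLike.mem_coe, mem_restrictTotalDegree]
      have h1 : (v.1.1 : MP).totalDegree ≤ q + n := (mem_restrictTotalDegree _ _ _).mp v.1.2
      rw [hc, tdeg_mul_eq g c hg hc0] at h1
      omega
  -- kernel dimension bound
  have hkerle : Module.finrank ℂ (LinearMap.ker φ) ≤
      Module.finrank ℂ (restrictTotalDegree (Fin 2) ℂ q) := by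
    set χ : (LinearMap.ker φ) →ₗ[ℂ] MP :=
      (Submodule.subtype _) ∘ₗ (LinearMap.fst ℂ _ _) ∘ₗ (Submodule.subtype _) with hχ
    have hχ_apply : ∀ v : LinearMap.ker φ, χ v = (v.1.1.1 : MP) := fun v => rfl
    set θ : (LinearMap.ker φ) →ₗ[ℂ] J :=
      χ.codRestrict J (fun v => hker v.1 (LinearMap.mem_ker.mp v.2)) with hθ
    have hθinj : Function.Injective θ := by
      intro v w hvw
      have hfst : (v.1.1.1 : MP) = (w.1.1.1 : MP) := congrArg (Subtype.val : J → MP) hvw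
      have hv2 : φ v.1 = 0 := LinearMap.mem_ker.mp v.2
      have hw2 : φ w.1 = 0 := LinearMap.mem_ker.mp w.2
      rw [hφ_apply] at hv2 hw2
      have hsnd : (v.1.2.1 : MP) = (w.1.2.1 : MP) := by
        have h3 : f * (v.1.1.1 : MP) + g * (v.1.2.1 : MP)
            = f * (w.1.1.1 : MP) + g * (w.1.2.1 : MP) := by rw [hv2, hw2]
        rw [hfst] at h3
        exact mul_left_cancel₀ hg (add_left_cancel h3)
      apply Subtype.ext
      apply Prod.ext
      · exact Subtype.ext hfst
      · exact Subtype.ext hsnd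
    have h1 : Module.finrank ℂ (LinearMap.ker φ) ≤ Module.finrank ℂ J :=
      LinearMap.finrank_le_finrank_of_injective hθinj
    exact h1.trans (hJ ▸ Submodule.finrank_map_le _ _)
  -- rank-nullity
  have hrn := LinearMap.finrank_range_add_finrank_ker φ
  have hVdim : Module.finrank ℂ
      ((restrictTotalDegree (Fin 2) ℂ (q+n)) × (restrictTotalDegree (Fin 2) ℂ (q+m)))
      = Module.finrank ℂ (restrictTotalDegree (Fin 2) ℂ (q+n))
        + Module.finrank ℂ (restrictTotalDegree (Fin 2) ℂ (q+m)) :=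
    Module.finrank_prod
  rw [hVdim] at hrn
  -- the span of powers of X 0
  have hWli : LinearIndependent ℂ (fun j : Fin (q+1) => (X 0 : MP) ^ (j : ℕ)) := by
    have hinj : Function.Injective (fun j : Fin (q+1) => Finsupp.single (0 : Fin 2) (j : ℕ)) := by
      intro a b h
      have h0 := DFunLike.congr_fun h 0
      simp only [Finsupp.single_eq_same] at h0
      exact Fin.ext h0
    have h2 := (basisMonomials (Fin 2) ℂ).linearIndependent.comp _ hinj
    have heq : ((basisMonomials (Fin 2) ℂ) ∘ fun j : Fin (q+1) => Finsupp.single (0 : Fin 2) (j:ℕ))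
        = fun j : Fin (q+1) => (X 0 : MP) ^ (j : ℕ) := by
      funext j
      simp [coe_basisMonomials, X_pow_eq_monomial]
    rwa [heq] at h2
  have hWdim : Module.finrank ℂ
      (Submodule.span ℂ (Set.range fun j : Fin (q+1) => (X 0 : MP) ^ (j:ℕ))) = q + 1 := by
    rw [finrank_span_eq_card hWli, Fintype.card_fin]
  haveI hWfd : FiniteDimensional ℂ
      (Submodule.span ℂ (Set.range fun j : Fin (q+1) => (X 0 : MP) ^ (j:ℕ))) :=
    FiniteDimensional.span_of_finite ℂ (Set.finite_range _)
  haveI hIfd : Module.Finite ℂ (LinearMap.range φ) := Module.Finite.range φ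
  have hWle : Submodule.span ℂ (Set.range fun j : Fin (q+1) => (X 0 : MP) ^ (j:ℕ))
      ≤ restrictTotalDegree (Fin 2) ℂ (q+m+n) := by
    rw [Submodule.span_le]
    rintro _ ⟨j, rfl⟩
    rw [SetLike.mem_coe, mem_restrictTotalDegree, totalDegree_X_pow]
    have hj := j.isLt
    omega
  have hIle : LinearMap.range φ ≤ restrictTotalDegree (Fin 2) ℂ (q+m+n) := by
    rintro _ ⟨v, rfl⟩
    rw [hφ_apply, mem_restrictTotalDegree]
    have h1 : (f * (v.1.1 : MP)).totalDegree ≤ m + (q+n) := by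
      refine le_trans (totalDegree_mul _ _) ?_
      have h2 := (mem_restrictTotalDegree _ _ _).mp v.1.2
      omega
    have h2 : (g * (v.2.1 : MP)).totalDegree ≤ n + (q+m) := by
      refine le_trans (totalDegree_mul _ _) ?_
      have h3 := (mem_restrictTotalDegree _ _ _).mp v.2.2
      omega
    refine le_trans (totalDegree_add _ _) ?_
    rw [max_le_iff]
    omega
  have hsum := Submodule.finrank_sup_add_finrank_inf_eq
    (Submodule.span ℂ (Set.range fun j : Fin (q+1) => (X 0 : MP) ^ (j:ℕ))) (LinearMap.range φ)
  rw [hWdim] at hsum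
  have hsuple : Module.finrank ℂ
      ((Submodule.span ℂ (Set.range fun j : Fin (q+1) => (X 0 : MP) ^ (j:ℕ))) ⊔ LinearMap.range φ : Submodule ℂ MP)
      ≤ Module.finrank ℂ (restrictTotalDegree (Fin 2) ℂ (q+m+n)) :=
    Submodule.finrank_mono (sup_le hWle hIle)
  have hd1 := finrank_rtd (q+n)
  have hd2 := finrank_rtd (q+m)
  have hd3 := finrank_rtd q
  have hd4 := finrank_rtd (q+m+n)
  have hA : (q+n+1)*(q+n+2) + (q+m+1)*(q+m+2) + 2*q
      = (q+m+n+1)*(q+m+n+2) + (q+1)*(q+2) := by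
    rw [hq]; ring
  have hpos : 0 < Module.finrank ℂ
      ((Submodule.span ℂ (Set.range fun j : Fin (q+1) => (X 0 : MP) ^ (j:ℕ)))
        ⊓ LinearMap.range φ : Submodule ℂ MP) := by
    set A1 := (q+n+1)*(q+n+2) with hA1
    set A2 := (q+m+1)*(q+m+2) with hA2
    set A3 := (q+1)*(q+2) with hA3
    set A4 := (q+m+n+1)*(q+m+n+2) with hA4
    omega
  obtain ⟨r, hrmem, hr0⟩ := Submodule.exists_mem_ne_zero_of_ne_bot
    (p := (Submodule.span ℂ (Set.range fun j : Fin (q+1) => (X 0 : MP) ^ (j:ℕ)))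
      ⊓ LinearMap.range φ) (by
      intro hbot
      rw [hbot, finrank_bot] at hpos
      omega)
  rw [Submodule.mem_inf] at hrmem
  obtain ⟨hrW, hrI⟩ := hrmem
  obtain ⟨c, hc⟩ := (Submodule.mem_span_range_iff_exists_fun ℂ).mp hrW
  obtain ⟨v, hv⟩ := hrI
  set p : Polynomial ℂ := ∑ j : Fin (q+1), Polynomial.C (c j) * Polynomial.X ^ (j:ℕ) with hp
  have hψ : Polynomial.eval₂ (MvPolynomial.C : ℂ →+* MP) (X 0) p = r := by
    rw [hp, Polynomial.eval₂_finset_sum]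
    rw [← hc]
    refine Finset.sum_congr rfl fun j _ => ?_
    rw [Polynomial.eval₂_mul, Polynomial.eval₂_C, Polynomial.eval₂_X_pow,
      MvPolynomial.smul_eq_C_mul]
  have hp0 : p ≠ 0 := by
    intro h
    rw [h, Polynomial.eval₂_zero] at hψ
    exact hr0 hψ.symm
  have hdeg : p.natDegree ≤ q := by
    rw [hp]
    refine Polynomial.natDegree_sum_le_of_forall_le _ _ fun j _ => ?_
    refine le_trans (Polynomial.natDegree_C_mul_X_pow_le _ _) ?_
    have hj := j.isLt
    omega
  refine ⟨p, hp0, hdeg, ?_⟩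
  intro x hfx hgx
  have hrx : eval x r = 0 := by
    rw [← hv, hφ_apply]
    simp [hfx, hgx]
  have hcomp : (eval x).comp (MvPolynomial.C : ℂ →+* MP) = RingHom.id ℂ :=
    RingHom.ext fun a => by simp
  have h6 : Polynomial.eval (x 0) p = eval x r := by
    rw [← hψ, Polynomial.hom_eval₂, hcomp, eval_X]
    rfl
  rw [h6, hrx]

lemma aeval_comp_pm (t : ℂ) (p : MP) :
    aeval ![(X 0 : MP) + C t * X 1, X 1] (aeval ![(X 0 : MP) - C t * X 1, X 1] p) = p := by
  have h : ((aeval ![(X 0 : MP) + C t * X 1, X 1]).comp (aeval ![(X 0 : MP) - C t * X 1, X 1])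
      : MP →ₐ[ℂ] MP) = AlgHom.id ℂ MP := by
    apply MvPolynomial.algHom_ext
    intro i
    fin_cases i <;> simp <;> ring
  exact AlgHom.congr_fun h p

lemma aeval_comp_mp (t : ℂ) (p : MP) :
    aeval ![(X 0 : MP) - C t * X 1, X 1] (aeval ![(X 0 : MP) + C t * X 1, X 1] p) = p := by
  have h : ((aeval ![(X 0 : MP) - C t * X 1, X 1]).comp (aeval ![(X 0 : MP) + C t * X 1, X 1])
      : MP →ₐ[ℂ] MP) = AlgHom.id ℂ MP := by
    apply MvPolynomial.algHom_ext
    intro i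
    fin_cases i <;> simp <;> ring
  exact AlgHom.congr_fun h p

lemma tdeg_subst_le_m (t : ℂ) (p : MP) :
    (aeval ![(X 0 : MP) - C t * X 1, X 1] p).totalDegree ≤ p.totalDegree := by
  apply tdeg_aeval_le
  intro i
  fin_cases i
  · refine le_trans (totalDegree_sub _ _) ?_
    rw [max_le_iff]
    constructor
    · rw [totalDegree_X]
    · refine le_trans (totalDegree_mul _ _) ?_
      rw [totalDegree_C, totalDegree_X]
  · exact le_of_eq (totalDegree_X 1)

lemma tdeg_subst_le_p (t : ℂ) (p : MP) :
    (aeval ![(X 0 : MP) + C t * X 1, X 1] p).totalDegree ≤ p.totalDegree := by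
  apply tdeg_aeval_le
  intro i
  fin_cases i
  · refine le_trans (totalDegree_add _ _) ?_
    rw [max_le_iff]
    constructor
    · rw [totalDegree_X]
    · refine le_trans (totalDegree_mul _ _) ?_
      rw [totalDegree_C, totalDegree_X]
  · exact le_of_eq (totalDegree_X 1)

lemma exists_good_t (T : Finset (Fin 2 → ℂ)) :
    ∃ t : ℂ, Set.InjOn (fun x : Fin 2 → ℂ => x 0 + t * x 1) ↑T := by
  classical
  set Bad : Set ℂ := ⋃ x ∈ T, ⋃ y ∈ T, {t | x ≠ y ∧ x 0 + t * x 1 = y 0 + t * y 1} with hBad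
  have hfin : Bad.Finite := by
    refine Set.Finite.biUnion T.finite_toSet fun x _ => Set.Finite.biUnion T.finite_toSet
      fun y _ => Set.Subsingleton.finite ?_
    intro t1 ht1 t2 ht2
    obtain ⟨hxy, he1⟩ := ht1
    obtain ⟨-, he2⟩ := ht2
    by_cases h11 : x 1 = y 1
    · exfalso
      apply hxy
      have h00 : x 0 = y 0 := by
        rw [h11] at he1
        exact add_right_cancel he1
      funext i
      fin_cases i
      · exact h00
      · exact h11
    · have : t1 * (x 1 - y 1) = t2 * (x 1 - y 1) := by linear_combination he1 - he2
      exact mul_right_cancel₀ (sub_ne_zero.mpr h11) this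
  obtain ⟨t, ht⟩ := hfin.infinite_compl.nonempty
  refine ⟨t, fun x hx y hy hxy => ?_⟩
  by_contra hne
  apply ht
  rw [hBad]
  refine Set.mem_iUnion₂.mpr ⟨x, hx, Set.mem_iUnion₂.mpr ⟨y, hy, hne, hxy⟩⟩


/-- Bézout bound: if `f, g ∈ ℂ[x,y]` are nonzero and have no common
irreducible factor (every common divisor is a unit), then their common zero set in `ℂ²`
is finite, with at most `(deg f)(deg g)` points (total degrees). -/
theorem stmt_7 (f g : MvPolynomial (Fin 2) ℂ) (hf : f ≠ 0) (hg : g ≠ 0)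
    (hcoprime : ∀ d : MvPolynomial (Fin 2) ℂ, d ∣ f → d ∣ g → IsUnit d) :
    {x : Fin 2 → ℂ | eval x f = 0 ∧ eval x g = 0}.Finite ∧
      {x : Fin 2 → ℂ | eval x f = 0 ∧ eval x g = 0}.ncard ≤
        f.totalDegree * g.totalDegree := by
  classical
  have hcard : ∀ T : Finset (Fin 2 → ℂ),
      ↑T ⊆ {x : Fin 2 → ℂ | eval x f = 0 ∧ eval x g = 0} →
      T.card ≤ f.totalDegree * g.totalDegree := by
    intro T hT
    obtain ⟨t, hinj⟩ := exists_good_t T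
    have hf' : aeval ![(X 0 : MP) - C t * X 1, X 1] f ≠ 0 := by
      intro h
      apply hf
      rw [← aeval_comp_pm t f, h, map_zero]
    have hg' : aeval ![(X 0 : MP) - C t * X 1, X 1] g ≠ 0 := by
      intro h
      apply hg
      rw [← aeval_comp_pm t g, h, map_zero]
    have hcop' : ∀ d : MP, d ∣ aeval ![(X 0 : MP) - C t * X 1, X 1] f →
        d ∣ aeval ![(X 0 : MP) - C t * X 1, X 1] g → IsUnit d := by
      intro d hd1 hd2
      have h1 : aeval ![(X 0 : MP) + C t * X 1, X 1] d ∣ f := by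
        have h := map_dvd (aeval ![(X 0 : MP) + C t * X 1, X 1]) hd1
        rwa [aeval_comp_pm] at h
      have h2 : aeval ![(X 0 : MP) + C t * X 1, X 1] d ∣ g := by
        have h := map_dvd (aeval ![(X 0 : MP) + C t * X 1, X 1]) hd2
        rwa [aeval_comp_pm] at h
      have h3 := hcoprime _ h1 h2
      have h4 : d = aeval ![(X 0 : MP) - C t * X 1, X 1]
          (aeval ![(X 0 : MP) + C t * X 1, X 1] d) := (aeval_comp_mp t d).symm
      rw [h4]
      exact h3.map _
    obtain ⟨P, hP0, hPdeg, hPeval⟩ := key_lemma _ _ hf' hg' hcop'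
    have hdf : (aeval ![(X 0 : MP) - C t * X 1, X 1] f).totalDegree = f.totalDegree := by
      refine le_antisymm (tdeg_subst_le_m t f) ?_
      conv_lhs => rw [← aeval_comp_pm t f]
      exact tdeg_subst_le_p t _
    have hdg : (aeval ![(X 0 : MP) - C t * X 1, X 1] g).totalDegree = g.totalDegree := by
      refine le_antisymm (tdeg_subst_le_m t g) ?_
      conv_lhs => rw [← aeval_comp_pm t g]
      exact tdeg_subst_le_p t _
    rw [hdf, hdg] at hPdeg
    have heval : ∀ (p : MP) (y : Fin 2 → ℂ),
        eval ![y 0 + t * y 1, y 1] (aeval ![(X 0 : MP) - C t * X 1, X 1] p) = eval y p := by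
      intro p y
      have hcomp : (eval ![y 0 + t * y 1, y 1]).comp
          ((aeval ![(X 0 : MP) - C t * X 1, X 1] : MP →ₐ[ℂ] MP) : MP →+* MP) = eval y := by
        apply ringHom_ext
        · intro a
          simp
        · intro i
          fin_cases i <;> simp <;> ring
      exact RingHom.congr_fun hcomp p
    have hsub : T.image (fun y => y 0 + t * y 1) ⊆ P.roots.toFinset := by
      intro z hz
      obtain ⟨y, hyT, rfl⟩ := Finset.mem_image.mp hz
      obtain ⟨hyf, hyg⟩ := hT hyT
      rw [Multiset.mem_toFinset, Polynomial.mem_roots hP0]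
      have h5 := hPeval ![y 0 + t * y 1, y 1]
        (by rw [heval f y]; exact hyf) (by rw [heval g y]; exact hyg)
      simpa using h5
    calc T.card = (T.image fun y => y 0 + t * y 1).card :=
          (Finset.card_image_of_injOn hinj).symm
      _ ≤ P.roots.toFinset.card := Finset.card_le_card hsub
      _ ≤ Multiset.card P.roots := Multiset.toFinset_card_le _
      _ ≤ P.natDegree := Polynomial.card_roots' P
      _ ≤ _ := hPdeg
  have hfin : {x : Fin 2 → ℂ | eval x f = 0 ∧ eval x g = 0}.Finite := by
    by_contra hinf
    obtain ⟨T, hTsub, hTcard⟩ := Set.Infinite.exists_subset_card_eq hinf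
      (f.totalDegree * g.totalDegree + 1)
    have h6 := hcard T hTsub
    omega
  refine ⟨hfin, ?_⟩
  rw [Set.ncard_eq_toFinset_card _ hfin]
  exact hcard hfin.toFinset (by simp)
end
end

section
/- Let f : ℝ² → ℝ be a C¹ function and let γ be a connected component of f⁻¹(0) that is homeomorphic to the circle S¹. Then there exist two distinct points p ≠ q on γ at which the partial derivative ∂f/∂y vanishes: ∂f/∂y(p) = ∂f/∂y(q) = 0. (Such points arise at the maximum and minimum of the first coordinate function x restricted to γ: there, either the level set is singular or it has a vertical tangent, and in both cases f_y = 0.) -/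
/-!
The first coordinate attains its maximum at some `p` and its minimum at some `q` on the compact
curve `γ`. If `∂f/∂y (p) ≠ 0`, the implicit function theorem writes `γ` near `p` as a graph over
the first coordinate, so `γ` contains points to the right of `p`; hence `∂f/∂y (p) = 0`, and
likewise at `q`. Finally `p ≠ q`, since otherwise `γ` lies on a vertical line and the second
coordinate would embed the circle into `ℝ`, which is impossible: for continuous `g : S¹ → ℝ` the
function `g(-z) - g(z)` changes sign, so it vanishes somewhere.
-/

noncomputable section
open Metric Set Bornology

open Filter Topology

lemma Plane.ext_of_coords {z w : Plane} (h₀ : z 0 = w 0) (h₁ : z 1 = w 1) : z = w := by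
  ext i; fin_cases i <;> assumption

lemma Circle.exp_add_pi_ne (t : ℝ) : Circle.exp (t + Real.pi) ≠ Circle.exp t := by
  rw [Ne, Circle.exp_eq_exp]
  rintro ⟨m, hm⟩
  have hreal : ((1 - 2 * m : ℤ) : ℝ) * Real.pi = 0 := by push_cast; linarith
  have hint : 1 - 2 * m = 0 := by
    exact_mod_cast (mul_eq_zero.1 hreal).resolve_right Real.pi_ne_zero
  omega

lemma Circle.not_injective_of_continuous {g : Circle → ℝ} (hg : Continuous g) :
    ¬ Function.Injective g := by
  intro hinj
  set h : ℝ → ℝ := fun t => g (Circle.exp (t + Real.pi)) - g (Circle.exp t)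
  have hh : Continuous h := by fun_prop
  have h_pi : h Real.pi = - h 0 := by
    simp only [h, zero_add, ← two_mul, Circle.exp_two_pi, Circle.exp_zero]
    ring
  obtain ⟨t, -, ht⟩ : ∃ t ∈ uIcc 0 Real.pi, h t = 0 := by
    refine intermediate_value_uIcc hh.continuousOn ?_
    rw [h_pi, mem_uIcc]
    rcases le_total 0 (h 0) with h0 | h0
    · exact Or.inr ⟨by linarith, h0⟩
    · exact Or.inl ⟨h0, by linarith⟩
  exact Circle.exp_add_pi_ne t (hinj (sub_eq_zero.1 ht))

lemma Plane.injective_proj_zero_prod {ℓ : Plane →L[ℝ] ℝ}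
    (hℓ : ℓ (EuclideanSpace.single 1 1) ≠ 0) :
    Function.Injective ((EuclideanSpace.proj 0 : Plane →L[ℝ] ℝ).prod ℓ) := by
  rw [injective_iff_map_eq_zero]
  intro z hz
  have h₀ : z 0 = 0 := congrArg Prod.fst hz
  have hz_eq : z = z 1 • EuclideanSpace.single 1 1 :=
    Plane.ext_of_coords (by simp [h₀]) (by simp)
  have h₁ : z 1 * ℓ (EuclideanSpace.single 1 1) = 0 := by
    rw [← smul_eq_mul, ← map_smul, ← hz_eq]; exact congrArg Prod.snd hz
  exact Plane.ext_of_coords (by simp [h₀]) (by simpa [hℓ] using h₁)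

theorem image_connectedComponentIn_level_mem_nhds {f : Plane → ℝ} {f' : Plane →L[ℝ] ℝ}
    {p : Plane} (hf : HasStrictFDerivAt f f' p) (hy : f' (EuclideanSpace.single 1 1) ≠ 0) :
    (fun z : Plane => z 0) '' connectedComponentIn (f ⁻¹' {f p}) p ∈ 𝓝 (p 0) := by
  -- The inverse function theorem for `g`, restricted to the horizontal line `ℝ × {f p}`.
  set g : Plane → ℝ × ℝ := fun z => (z 0, f z)
  let A : Plane ≃L[ℝ] ℝ × ℝ := (LinearMap.linearEquivOfInjective _
    (Plane.injective_proj_zero_prod hy) (by simp)).toContinuousLinearEquiv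
  have hg : HasStrictFDerivAt g (A : Plane →L[ℝ] ℝ × ℝ) p :=
    (EuclideanSpace.proj (0 : Fin 2)).hasStrictFDerivAt.prodMk hf
  set G := hg.toOpenPartialHomeomorph g
  obtain ⟨ε, hε, hball⟩ := Metric.isOpen_iff.1 G.open_target (g p)
    hg.image_mem_toOpenPartialHomeomorph_target
  have hmem : ∀ t ∈ ball (p 0) ε, (t, f p) ∈ G.target := fun t ht =>
    hball (by simpa [Prod.dist_eq, g, hε] using ht)
  have hgc : ∀ t ∈ ball (p 0) ε, g (G.symm (t, f p)) = (t, f p) := fun t ht =>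
    G.right_inv (hmem t ht)
  have hcp : G.symm (p 0, f p) = p := G.left_inv hg.mem_toOpenPartialHomeomorph_source
  have hsub : (fun t => G.symm (t, f p)) '' ball (p 0) ε ⊆
      connectedComponentIn (f ⁻¹' {f p}) p := by
    refine IsPreconnected.subset_connectedComponentIn ?_ ⟨p 0, mem_ball_self hε, hcp⟩ ?_
    · exact (convex_ball _ _).isPreconnected.image _
        (G.continuousOn_symm.comp (by fun_prop) hmem)
    · rintro _ ⟨t, ht, rfl⟩
      exact congrArg Prod.snd (hgc t ht)
  refine Filter.mem_of_superset (ball_mem_nhds _ hε) fun t ht => ?_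
  exact ⟨_, hsub ⟨t, ht, rfl⟩, congrArg Prod.fst (hgc t ht)⟩

theorem HasStrictFDerivAt.apply_single_one_eq_zero_of_isExtrOn {f : Plane → ℝ}
    {f' : Plane →L[ℝ] ℝ} {p : Plane} (hf : HasStrictFDerivAt f f' p)
    (hext : IsExtrOn (fun z : Plane => z 0) (connectedComponentIn (f ⁻¹' {f p}) p) p) :
    f' (EuclideanSpace.single 1 1) = 0 := by
  by_contra hy
  have hnhds := eventually_mem_set.2 (image_connectedComponentIn_level_mem_nhds hf hy)
  rcases hext with hmin | hmax
  · obtain ⟨t, hlt, z, hz, rfl⟩ := hnhds.exists_lt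
    exact (hmin hz).not_gt hlt
  · obtain ⟨t, hgt, z, hz, rfl⟩ := hnhds.exists_gt
    exact (hmax hz).not_gt hgt

lemma exists_mem_coord_zero_ne_of_homeomorph_circle {γ : Set Plane} (e : γ ≃ₜ Circle) (c : ℝ) :
    ∃ z ∈ γ, z 0 ≠ c := by
  by_contra! hvert
  refine Circle.not_injective_of_continuous (g := fun u => (e.symm u : Plane) 1) (by fun_prop) ?_
  intro u v huv
  exact e.symm.injective (Subtype.ext (Plane.ext_of_coords
    ((hvert _ (e.symm u).2).trans (hvert _ (e.symm v).2).symm) huv))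

/-- If `f : ℝ² → ℝ` is `C¹` and `γ` is a connected component of `f⁻¹(0)`
homeomorphic to the circle, then there are two distinct points of `γ` at which the partial
derivative `∂f/∂y` vanishes. -/
theorem stmt_8 (f : Plane → ℝ) (hf : ContDiff ℝ 1 f)
    (γ : Set Plane) (hγ : IsNodalOval f γ) :
    ∃ p q : Plane, p ∈ γ ∧ q ∈ γ ∧ p ≠ q ∧
      fderiv ℝ f p (EuclideanSpace.single 1 1) = 0 ∧
      fderiv ℝ f q (EuclideanSpace.single 1 1) = 0 := by
  obtain ⟨⟨x₀, hx₀, rfl⟩, ⟨e⟩⟩ := hγ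
  have hcompact : IsCompact (connectedComponentIn (f ⁻¹' {0}) x₀) :=
    isCompact_iff_compactSpace.2 e.symm.compactSpace
  have hcoord : Continuous fun z : Plane => z 0 := by fun_prop
  obtain ⟨p, hp, hpmax⟩ :=
    hcompact.exists_isMaxOn ⟨x₀, mem_connectedComponentIn hx₀⟩ hcoord.continuousOn
  obtain ⟨q, hq, hqmin⟩ :=
    hcompact.exists_isMinOn ⟨x₀, mem_connectedComponentIn hx₀⟩ hcoord.continuousOn
  have hcomponent : ∀ z ∈ connectedComponentIn (f ⁻¹' {0}) x₀,
      connectedComponentIn (f ⁻¹' {f z}) z = connectedComponentIn (f ⁻¹' {0}) x₀ :=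
    fun z hz => by rw [connectedComponentIn_subset _ _ hz, connectedComponentIn_eq hz]
  have hstrict := fun z => hf.contDiffAt.hasStrictFDerivAt (x := z) one_ne_zero
  refine ⟨p, q, hp, hq, ?_, (hstrict p).apply_single_one_eq_zero_of_isExtrOn ?_,
    (hstrict q).apply_single_one_eq_zero_of_isExtrOn ?_⟩
  · rintro rfl
    obtain ⟨z, hz, hne⟩ := exists_mem_coord_zero_ne_of_homeomorph_circle e (p 0)
    exact hne ((hpmax hz).antisymm (hqmin hz))
  · rw [hcomponent p hp]; exact hpmax.isExtr
  · rw [hcomponent q hq]; exact hqmin.isExtr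
end
end

section
/- Define w : ℝ → ℝ by w(t) = exp(1/((t+1)(t−1)))·cos(1/((t+1)(t−1))) for −1 < t < 1 and w(t) = 0 for |t| ≥ 1. Then w is C^∞ on ℝ, and w has infinitely many simple zeros in the open interval (−1,1): the set {t ∈ (−1,1) : w(t) = 0 and w'(t) ≠ 0} is infinite. -/
/-!
On `(-1, 1)` we have `w t = Re (exp (-(1 + i) / (1 - t²)))`, so `w` is the real part of
`x ↦ exp (-c / x)` (extended by `0` for `x ≤ 0`) at `c = 1 + i`, composed with `1 - t²`.
For `0 < Re c` this glue function is smooth by the argument for `expNegInvGlue`: the derivative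
of `p (1 / x) · exp (-c / x)` has the same shape for another polynomial `p`, and all such
functions tend to `0` at `0` because `exp (-c / x)` decays faster than any power of `1 / x`.

The zeros at which `1 / ((t + 1) (t - 1)) = -(π / 2 + k π)` are simple: there `cos` vanishes,
so `sin` does not, and the inner function has nonzero derivative away from `t = 0`.
-/

noncomputable section
open Set Real

/-- The function `w(t) = exp(1/((t+1)(t−1))) cos(1/((t+1)(t−1)))` for `−1 < t < 1`,
extended by `0` outside `(−1, 1)`. -/
def w (t : ℝ) : ℝ :=
  if -1 < t ∧ t < 1 then
    Real.exp (1 / ((t + 1) * (t - 1))) * Real.cos (1 / ((t + 1) * (t - 1)))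
  else 0

open Filter Polynomial Complex
open scoped Topology

def cexpNegInvGlue (c : ℂ) (x : ℝ) : ℂ :=
  if x ≤ 0 then 0 else cexp (-c * (x : ℂ)⁻¹)

namespace cexpNegInvGlue

variable {c : ℂ}

theorem zero_of_nonpos {x : ℝ} (hx : x ≤ 0) : cexpNegInvGlue c x = 0 := if_pos hx

theorem of_pos {x : ℝ} (hx : 0 < x) : cexpNegInvGlue c x = cexp (-c * (x : ℂ)⁻¹) :=
  if_neg hx.not_ge

theorem tendsto_polynomial_mul_cexp_atTop (hc : 0 < c.re) (p : ℂ[X]) :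
    Tendsto (fun y : ℝ ↦ p.eval (y : ℂ) * cexp (-c * y)) atTop (𝓝 0) := by
  have monomial (n : ℕ) :
      Tendsto (fun y : ℝ ↦ (y : ℂ) ^ n * cexp (-c * y)) atTop (𝓝 0) := by
    refine squeeze_zero_norm' ?_ (tendsto_rpow_mul_exp_neg_mul_atTop_nhds_zero n c.re hc)
    filter_upwards [eventually_ge_atTop 0] with y hy
    simp [Complex.norm_exp, Real.rpow_natCast, abs_of_nonneg hy]
  simp_rw [eval_eq_sum_range, Finset.sum_mul, mul_assoc]
  simpa using tendsto_finsetSum _ fun i _ ↦ (monomial i).const_mul (p.coeff i)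

theorem tendsto_polynomial_inv_mul_zero (hc : 0 < c.re) (p : ℂ[X]) :
    Tendsto (fun x : ℝ ↦ p.eval (x : ℂ)⁻¹ * cexpNegInvGlue c x) (𝓝 0) (𝓝 0) := by
  simp only [cexpNegInvGlue, mul_ite, mul_zero]
  refine tendsto_const_nhds.if ?_
  simp only [not_le]
  exact ((tendsto_polynomial_mul_cexp_atTop hc p).comp tendsto_inv_nhdsGT_zero).congr
    fun x ↦ by simp

theorem hasDerivAt_polynomial_eval_inv_mul (hc : 0 < c.re) (p : ℂ[X]) (x : ℝ) :
    HasDerivAt (fun x : ℝ ↦ p.eval (x : ℂ)⁻¹ * cexpNegInvGlue c x)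
      ((X ^ 2 * (C c * p - derivative p)).eval (x : ℂ)⁻¹ * cexpNegInvGlue c x) x := by
  rcases lt_trichotomy x 0 with hx | rfl | hx
  · rw [zero_of_nonpos hx.le, mul_zero]
    refine (hasDerivAt_const _ 0).congr_of_eventuallyEq ?_
    filter_upwards [gt_mem_nhds hx] with y hy
    rw [zero_of_nonpos hy.le, mul_zero]
  · rw [zero_of_nonpos le_rfl, mul_zero, hasDerivAt_iff_tendsto_slope]
    refine ((tendsto_polynomial_inv_mul_zero hc (p * X)).mono_left inf_le_left).congr fun x ↦ ?_
    simp [slope_def_module, zero_of_nonpos le_rfl, Complex.real_smul]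
    ring
  · have hx' : (x : ℂ) ≠ 0 := ofReal_ne_zero.2 hx.ne'
    have := (((p.hasDerivAt _).mul ((hasDerivAt_id _).const_mul (-c)).cexp).comp _
      (hasDerivAt_inv hx')).comp_ofReal
    refine (this.congr_of_eventuallyEq ?_).congr_deriv ?_
    · filter_upwards [lt_mem_nhds hx] with y hy
      simp [of_pos hy]
    · simp [of_pos hx]
      ring

theorem contDiff_polynomial_eval_inv_mul (hc : 0 < c.re) {n : ℕ∞} (p : ℂ[X]) :
    ContDiff ℝ n (fun x : ℝ ↦ p.eval (x : ℂ)⁻¹ * cexpNegInvGlue c x) := by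
  apply contDiff_all_iff_nat.2 (fun m ↦ ?_) n
  induction m generalizing p with
  | zero =>
    exact contDiff_zero.2 (continuous_iff_continuousAt.2 fun x ↦
      (hasDerivAt_polynomial_eval_inv_mul hc p x).continuousAt)
  | succ m ihm =>
    rw [show ((m + 1 : ℕ) : WithTop ℕ∞) = m + 1 from rfl]
    refine contDiff_succ_iff_deriv.2
      ⟨fun x ↦ (hasDerivAt_polynomial_eval_inv_mul hc p x).differentiableAt, by simp, ?_⟩
    rw [funext fun x ↦ (hasDerivAt_polynomial_eval_inv_mul hc p x).deriv]
    exact ihm _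

protected theorem contDiff (hc : 0 < c.re) {n : ℕ∞} : ContDiff ℝ n (cexpNegInvGlue c) := by
  simpa using contDiff_polynomial_eval_inv_mul hc (n := n) 1

end cexpNegInvGlue

theorem w_eq_re_cexpNegInvGlue (t : ℝ) :
    w t = (cexpNegInvGlue (1 + I) (1 - t ^ 2)).re := by
  by_cases ht : -1 < t ∧ t < 1
  · have hpos : 0 < 1 - t ^ 2 := by nlinarith
    have hinv : (1 - t ^ 2)⁻¹ = -(1 / ((t + 1) * (t - 1))) := by
      rw [one_div, ← inv_neg]; ring_nf
    rw [w, if_pos ht, cexpNegInvGlue.of_pos hpos, ← ofReal_inv, hinv, Complex.exp_re]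
    generalize 1 / ((t + 1) * (t - 1)) = u
    simp
  · have hnonpos : 1 - t ^ 2 ≤ 0 := by
      rcases not_and_or.1 ht with h | h <;> nlinarith [not_lt.1 h]
    rw [w, if_neg ht, cexpNegInvGlue.zero_of_nonpos hnonpos, zero_re]

theorem contDiff_w : ContDiff ℝ (⊤ : ℕ∞) w := by
  rw [funext w_eq_re_cexpNegInvGlue]
  exact reCLM.contDiff.comp ((cexpNegInvGlue.contDiff (by simp)).comp (by fun_prop))

theorem hasDerivAt_exp_mul_cos (u : ℝ) :
    HasDerivAt (fun u ↦ Real.exp u * Real.cos u) (Real.exp u * (Real.cos u - Real.sin u)) u :=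
  ((Real.hasDerivAt_exp u).mul (Real.hasDerivAt_cos u)).congr_deriv (by ring)

theorem hasDerivAt_one_div_mul_sub_one {t : ℝ} (ht : (t + 1) * (t - 1) ≠ 0) :
    HasDerivAt (fun t : ℝ ↦ 1 / ((t + 1) * (t - 1)))
      (-(2 * t) / ((t + 1) * (t - 1)) ^ 2) t := by
  have hq : HasDerivAt (fun t : ℝ ↦ (t + 1) * (t - 1)) (2 * t) t :=
    (((hasDerivAt_id' t).add_const 1).mul ((hasDerivAt_id' t).sub_const 1)).congr_deriv (by ring)
  simpa only [one_div] using hq.fun_inv ht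

theorem w_eq_zero_and_deriv_ne_zero {t : ℝ} (ht : t ∈ Ioo (-1 : ℝ) 1) (ht0 : t ≠ 0)
    (hcos : Real.cos (1 / ((t + 1) * (t - 1))) = 0) : w t = 0 ∧ deriv w t ≠ 0 := by
  have hq : (t + 1) * (t - 1) ≠ 0 := by nlinarith [ht.1, ht.2]
  have hw : w =ᶠ[𝓝 t]
      fun s ↦ Real.exp (1 / ((s + 1) * (s - 1))) * Real.cos (1 / ((s + 1) * (s - 1))) := by
    filter_upwards [isOpen_Ioo.mem_nhds ht] with s hs
    exact if_pos hs
  have hderiv := ((hasDerivAt_exp_mul_cos _).comp t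
    (hasDerivAt_one_div_mul_sub_one hq)).congr_of_eventuallyEq hw
  refine ⟨by rw [hw.eq_of_nhds, hcos, mul_zero], ?_⟩
  rw [hderiv.deriv, hcos, zero_sub]
  have hsin : Real.sin (1 / ((t + 1) * (t - 1))) ≠ 0 := by
    rcases Real.cos_eq_zero_iff_sin_eq.1 hcos with h | h <;> rw [h] <;> norm_num
  exact mul_ne_zero (mul_ne_zero (Real.exp_ne_zero _) (neg_ne_zero.2 hsin))
    (div_ne_zero (by simpa using ht0) (pow_ne_zero _ hq))

theorem exists_mem_Ioo_one_div_eq_neg {d : ℝ} (hd : 1 < d) :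
    ∃ t ∈ Ioo (0 : ℝ) 1, 1 / ((t + 1) * (t - 1)) = -d := by
  have h0 : 0 < 1 - 1 / d := by rw [sub_pos, div_lt_one (by linarith)]; exact hd
  refine ⟨√(1 - 1 / d), ⟨Real.sqrt_pos.2 h0, ?_⟩, ?_⟩
  · rw [Real.sqrt_lt' one_pos]; have : 0 < 1 / d := by positivity
    linarith
  · have : (√(1 - 1 / d) + 1) * (√(1 - 1 / d) - 1) = -(1 / d) := by
      rw [← mul_self_sub_one, Real.mul_self_sqrt h0.le]; ring
    rw [this]; field_simp

/-- `w` is `C^∞` on `ℝ` and has infinitely many simple zeros in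
`(−1, 1)`: the set of `t ∈ (−1,1)` with `w(t) = 0` and `w'(t) ≠ 0` is infinite. -/
theorem stmt_17 :
    ContDiff ℝ (⊤ : ℕ∞) w ∧
      {t : ℝ | -1 < t ∧ t < 1 ∧ w t = 0 ∧ deriv w t ≠ 0}.Infinite := by
  refine ⟨contDiff_w, ?_⟩
  have hd (k : ℕ) : 1 < π / 2 + k * π := by
    have : 0 ≤ k * π := by positivity
    linarith [pi_gt_three]
  choose t ht hq using fun k ↦ exists_mem_Ioo_one_div_eq_neg (hd k)
  refine infinite_of_injective_forall_mem (f := t) (fun k l hkl ↦ ?_) (fun k ↦ ?_)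
  · have := (hq k).symm.trans (hkl ▸ hq l)
    exact_mod_cast mul_right_cancel₀ pi_ne_zero (by linarith : (k : ℝ) * π = l * π)
  · have hcos : Real.cos (1 / ((t k + 1) * (t k - 1))) = 0 := by
      rw [hq, Real.cos_neg, Real.cos_add_nat_mul_pi, Real.cos_pi_div_two, mul_zero]
    have hmem : t k ∈ Ioo (-1 : ℝ) 1 := ⟨by linarith [(ht k).1], (ht k).2⟩
    exact ⟨hmem.1, hmem.2, w_eq_zero_and_deriv_ne_zero hmem (ht k).1.ne' hcos⟩
end
end
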